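/- Let x_0 < x_1 < ... < x_n be distinct real numbers. For each i let b_i : ℝ → ℝ be infinitely differentiable with b_i(x_ℓ) = δ_{iℓ}, and let d_i : ℝ → ℝ be infinitely differentiable with d_i(x_i) = 0 and d_i'(x_i) = 1. Define b_{i,j}(x) = (1/j!) d_i(x)^j b_i(x)^{j+1}. Let m ∈ ℕ, let f_{i,j} ∈ ℝ be given data, and let r : ℕ → (ℝ → ℝ) satisfy r_0 = Σ_{i=0}^n f_{i,0} b_{i,0} and r_j = r_{j-1} + Σ_{i=0}^n (f_{i,j} − r_{j-1}^{(j)}(x_i)) b_{i,j} for 1 ≤ j ≤ m. Then for every 0 ≤ k ≤ m and every node x_ℓ, the k-th iterated derivative of r_m at x_ℓ equals the k-th iterated derivative of r_k at x_ℓ; that is, the corrections q_j with j > k do not change derivatives of order k at the nodes. -/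

import Mathlib

open scoped BigOperators

/-- The Hermite basis functions `b_{i,j}(x) = (1/j!) d_i(x)^j b_i(x)^(j+1)`. -/
noncomputable def hermiteBasis (d b : ℝ → ℝ) (j : ℕ) : ℝ → ℝ :=
  fun t => (1 / (Nat.factorial j : ℝ)) * d t ^ j * b t ^ (j + 1)

private lemma myIteratedDeriv_add {n : ℕ} {f g : ℝ → ℝ} (hf : ContDiff ℝ (n : ℕ∞) f)
    (hg : ContDiff ℝ (n : ℕ∞) g) (x : ℝ) :
    iteratedDeriv n (fun t => f t + g t) x = iteratedDeriv n f x + iteratedDeriv n g x := by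
  have := iteratedDerivWithin_add (Set.mem_univ x) uniqueDiffOn_univ
    (f := f) (g := g) (hf.contDiffWithinAt) (hg.contDiffWithinAt)
  simp only [iteratedDerivWithin_univ] at this
  exact this

private lemma myIteratedDeriv_const_mul {n : ℕ} {f : ℝ → ℝ} (hf : ContDiff ℝ (n : ℕ∞) f)
    (c : ℝ) (x : ℝ) :
    iteratedDeriv n (fun t => c * f t) x = c * iteratedDeriv n f x := by
  have := iteratedDerivWithin_const_mul (Set.mem_univ x) uniqueDiffOn_univ c
    (f := f) (hf.contDiffWithinAt)
  simpa [iteratedDerivWithin_univ] using this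

private lemma myIteratedDeriv_sum {n : ℕ} {ι : Type*} (s : Finset ι) (g : ι → ℝ → ℝ)
    (hg : ∀ i ∈ s, ContDiff ℝ (n : ℕ∞) (g i)) (x : ℝ) :
    iteratedDeriv n (fun t => ∑ i ∈ s, g i t) x = ∑ i ∈ s, iteratedDeriv n (g i) x := by
  classical
  induction s using Finset.induction with
  | empty => simp [iteratedDeriv, iteratedFDeriv_zero_fun]
  | insert a s hnot ih =>
    have hga := hg a (Finset.mem_insert_self a s)
    have hsum : ContDiff ℝ (n : ℕ∞) (fun t => ∑ i ∈ s, g i t) := by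
      apply ContDiff.sum
      intro i hi
      exact hg i (Finset.mem_insert_of_mem hi)
    rw [Finset.sum_insert hnot]
    have : (fun t => ∑ i ∈ insert a s, g i t)
        = fun t => g a t + ∑ i ∈ s, g i t := by
      funext t; rw [Finset.sum_insert hnot]
    rw [this, myIteratedDeriv_add hga hsum,
      ih (fun i hi => hg i (Finset.mem_insert_of_mem hi))]

/-- If `p x0 = 0` then the `k`-th derivative of `p^j * φ` at `x0` vanishes for `k < j`. -/
private lemma vanish {p : ℝ → ℝ} (hp : ContDiff ℝ (⊤ : ℕ∞) p) {x0 : ℝ} (hp0 : p x0 = 0) :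
    ∀ k j : ℕ, k < j → ∀ φ : ℝ → ℝ, ContDiff ℝ (⊤ : ℕ∞) φ →
      iteratedDeriv k (fun t => p t ^ j * φ t) x0 = 0 := by
  intro k
  induction k with
  | zero =>
    intro j hj φ _
    have hj' : j ≠ 0 := by omega
    simp [iteratedDeriv_zero, hp0, zero_pow hj']
  | succ k ih =>
    intro j hj φ hφ
    rw [iteratedDeriv_succ']
    have hderiv : deriv (fun t => p t ^ j * φ t)
        = fun t => p t ^ (j - 1) * ((j : ℝ) * deriv p t * φ t + p t * deriv φ t) := by
      funext t
      have hpd : DifferentiableAt ℝ p t := hp.differentiable (by simp) t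
      have hφd : DifferentiableAt ℝ φ t := hφ.differentiable (by simp) t
      rw [deriv_fun_mul (c := fun t => p t ^ j) (hpd.pow j) hφd, deriv_fun_pow hpd j,
        show p t ^ j = p t * p t ^ (j - 1) by rw [← pow_succ']; congr 1; omega]
      ring
    rw [hderiv]
    have hφ' : ContDiff ℝ (⊤ : ℕ∞) (fun t => (j : ℝ) * deriv p t * φ t + p t * deriv φ t) := by
      have hp' : ContDiff ℝ (⊤ : ℕ∞) (deriv p) := (contDiff_infty_iff_deriv.mp hp).2
      have hφ'' : ContDiff ℝ (⊤ : ℕ∞) (deriv φ) := (contDiff_infty_iff_deriv.mp hφ).2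
      exact ((contDiff_const.mul hp').mul hφ).add (hp.mul hφ'')
    exact ih (j - 1) (by omega) _ hφ'

private lemma hermiteBasis_smooth {d b : ℝ → ℝ} (hd : ContDiff ℝ (⊤ : ℕ∞) d) (hb : ContDiff ℝ (⊤ : ℕ∞) b)
    (j : ℕ) : ContDiff ℝ (⊤ : ℕ∞) (hermiteBasis d b j) :=
  ((contDiff_const.mul (hd.pow j)).mul (hb.pow (j + 1)))

/-- The key vanishing result: `b_{i,j}^{(k)}(x_ℓ) = 0` for `k < j`. -/
private lemma hermiteBasis_deriv_vanish {n : ℕ} (x : Fin (n + 1) → ℝ)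
    (b d : Fin (n + 1) → ℝ → ℝ)
    (hb : ∀ i, ContDiff ℝ (⊤ : ℕ∞) (b i))
    (hbL : ∀ i ℓ, b i (x ℓ) = if i = ℓ then 1 else 0)
    (hd : ∀ i, ContDiff ℝ (⊤ : ℕ∞) (d i))
    (hd0 : ∀ i, d i (x i) = 0)
    (i ℓ : Fin (n + 1)) (k j : ℕ) (hkj : k < j) :
    iteratedDeriv k (hermiteBasis (d i) (b i) j) (x ℓ) = 0 := by
  by_cases hil : i = ℓ
  · subst hil
    have : hermiteBasis (d i) (b i) j
        = fun t => d i t ^ j * ((1 / (Nat.factorial j : ℝ)) * b i t ^ (j + 1)) := by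
      funext t; simp [hermiteBasis]; ring
    rw [this]
    exact vanish ((hd i).of_le (by simp)) (hd0 i) k j hkj _ (contDiff_const.mul (((hb i).of_le (by simp)).pow (j + 1)))
  · have hb0 : b i (x ℓ) = 0 := by rw [hbL]; simp [hil]
    have : hermiteBasis (d i) (b i) j
        = fun t => b i t ^ (j + 1) * ((1 / (Nat.factorial j : ℝ)) * d i t ^ j) := by
      funext t; simp [hermiteBasis]; ring
    rw [this]
    exact vanish ((hb i).of_le (by simp)) hb0 k (j + 1) (by omega) _ (contDiff_const.mul (((hd i).of_le (by simp)).pow j))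

/-- the corrections `q_j` with `j > k` do not change derivatives of
order `k` at the nodes: `r_m^{(k)}(x_ℓ) = r_k^{(k)}(x_ℓ)` for `k ≤ m`. -/
theorem corrections_do_not_change_lower_derivatives
    (n m : ℕ) (x : Fin (n + 1) → ℝ) (hx : StrictMono x)
    (b d : Fin (n + 1) → ℝ → ℝ)
    (hb : ∀ i, ContDiff ℝ (⊤ : ℕ∞) (b i))
    (hbL : ∀ i ℓ, b i (x ℓ) = if i = ℓ then 1 else 0)
    (hd : ∀ i, ContDiff ℝ (⊤ : ℕ∞) (d i))
    (hd0 : ∀ i, d i (x i) = 0)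
    (hd1 : ∀ i, deriv (d i) (x i) = 1)
    (f : Fin (n + 1) → ℕ → ℝ)
    (r : ℕ → ℝ → ℝ)
    (hr0 : r 0 = fun t => ∑ i, f i 0 * hermiteBasis (d i) (b i) 0 t)
    (hrstep : ∀ j, 1 ≤ j → j ≤ m →
      r j = fun t => r (j - 1) t +
        ∑ i, (f i j - iteratedDeriv j (r (j - 1)) (x i)) * hermiteBasis (d i) (b i) j t) :
    ∀ k, k ≤ m → ∀ ℓ, iteratedDeriv k (r m) (x ℓ) = iteratedDeriv k (r k) (x ℓ) := by
  -- smoothness of all r j for j ≤ m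
  have hrsmooth : ∀ j, j ≤ m → ContDiff ℝ (⊤ : ℕ∞) (r j) := by
    intro j
    induction j with
    | zero =>
      intro _
      rw [hr0]
      exact ContDiff.sum fun i _ =>
        contDiff_const.mul (hermiteBasis_smooth (hd i) (hb i) 0)
    | succ j ih =>
      intro hjm
      rw [hrstep (j + 1) (by omega) hjm]
      simp only [Nat.add_sub_cancel]
      exact (ih (by omega)).add (ContDiff.sum fun i _ =>
        contDiff_const.mul (hermiteBasis_smooth (hd i) (hb i) (j + 1)))
  -- main claim by induction from k to m
  intro k hk ℓ
  suffices h : ∀ j, k ≤ j → j ≤ m →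
      iteratedDeriv k (r j) (x ℓ) = iteratedDeriv k (r k) (x ℓ) from h m hk le_rfl
  intro j
  induction j with
  | zero =>
    intro h0 _
    rw [Nat.le_zero.mp h0]
  | succ j ih =>
    intro hkj hjm
    rcases Nat.eq_or_lt_of_le hkj with heq | hlt
    · rw [heq]
    · have hkj' : k ≤ j := by omega
      rw [hrstep (j + 1) (by omega) hjm]
      simp only [Nat.add_sub_cancel]
      have hrj : ContDiff ℝ (k : ℕ∞) (r j) :=
        (hrsmooth j (by omega)).of_le (by exact_mod_cast le_top)
      have hsum : ContDiff ℝ (k : ℕ∞) (fun t =>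
          ∑ i, (f i (j + 1) - iteratedDeriv (j + 1) (r j) (x i)) *
            hermiteBasis (d i) (b i) (j + 1) t) :=
        (ContDiff.sum fun i _ => contDiff_const.mul
          (hermiteBasis_smooth (hd i) (hb i) (j + 1))).of_le (by exact_mod_cast le_top)
      rw [myIteratedDeriv_add hrj hsum]
      have hzero : iteratedDeriv k (fun t =>
          ∑ i, (f i (j + 1) - iteratedDeriv (j + 1) (r j) (x i)) *
            hermiteBasis (d i) (b i) (j + 1) t) (x ℓ) = 0 := by
        rw [myIteratedDeriv_sum Finset.univ _ (fun i _ =>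
          (contDiff_const.mul (hermiteBasis_smooth (hd i) (hb i) (j + 1))).of_le (by exact_mod_cast le_top))]
        apply Finset.sum_eq_zero
        intro i _
        rw [myIteratedDeriv_const_mul ((hermiteBasis_smooth (hd i) (hb i) (j + 1)).of_le (by exact_mod_cast le_top))]
        rw [hermiteBasis_deriv_vanish x b d hb hbL hd hd0 i ℓ k (j + 1) (by omega)]
        ring
      rw [hzero, add_zero]
      exact ih hkj' (by omega)
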